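/- arXiv:2308.14010 — 8 statements merged into one kernel-verified Lean document; each statement's English description precedes it below -/
import Mathlib

section
/- Let D be any orientation of a simple graph G (not necessarily acyclic). Then χ(G) ≤ 2^{χ(L(D))}; equivalently, the chromatic number of L(D) is at least log₂(χ(G)). -/
open SimpleGraph

/-- The shift graph `G_{n,2}`: vertices are pairs `(i,j)` with `i < j` in `Fin n`,
and `(i,j)` is adjacent to `(k,l)` iff `j = k` or `l = i`. -/
def ShiftGraph (n : ℕ) : SimpleGraph {p : Fin n × Fin n // p.1 < p.2} :=
  SimpleGraph.fromRel (fun p q => p.1.2 = q.1.1)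

/-- The arcs of a digraph `D`. -/
def Arcs {V : Type} (D : V → V → Prop) : Type := {e : V × V // D e.1 e.2}

/-- The line digraph `L⃗(D)`: there is an arc from `(a,b)` to `(c,d)` iff `b = c`. -/
def LineDigraph {V : Type} (D : V → V → Prop) : Arcs D → Arcs D → Prop :=
  fun e f => e.1.2 = f.1.1

/-- The underlying undirected (simple) graph of a digraph. -/
def UG {V : Type} (D : V → V → Prop) : SimpleGraph V := SimpleGraph.fromRel D

/-- The undirected line graph `L(D)`: the underlying undirected graph of the line digraph,
in which two arcs are adjacent iff the head of one equals the tail of the other. -/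
def LineGraph {V : Type} (D : V → V → Prop) : SimpleGraph (Arcs D) :=
  UG (LineDigraph D)

/-- A digraph is an oriented graph if its arc relation is irreflexive and between any
two vertices at most one of the two opposite arcs is present. -/
def Oriented {V : Type} (D : V → V → Prop) : Prop :=
  Irreflexive D ∧ ∀ a b, D a b → ¬ D b a

/-- A digraph is acyclic if it contains no directed cycle, equivalently no vertex is
reachable from itself by a nonempty directed walk. -/
def DigraphAcyclic {V : Type} (D : V → V → Prop) : Prop :=
  ∀ v, ¬ Relation.TransGen D v v

/-- The iterated line digraph: `(IterLine V D g).1` is the vertex type of `L⃗^g(D)` and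
`(IterLine V D g).2` is its arc relation. -/
def IterLine (V : Type) (D : V → V → Prop) : ℕ → (W : Type) × (W → W → Prop)
  | 0 => ⟨V, D⟩
  | g + 1 => ⟨Arcs (IterLine V D g).2, LineDigraph (IterLine V D g).2⟩

/-- `l` is (the list of vertices of) a directed path from `x` to `y` in the digraph `D`:
consecutive vertices are joined by arcs, the vertices are pairwise distinct, and the
list starts at `x` and ends at `y`. -/
def IsDipath {V : Type} (D : V → V → Prop) (x y : V) (l : List V) : Prop :=
  l.Chain' D ∧ l.head? = some x ∧ l.getLast? = some y ∧ l.Nodup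

/-- A digraph has at most one directed path from any vertex to any other vertex. -/
def UniqueDipaths {V : Type} (D : V → V → Prop) : Prop :=
  ∀ x y l₁ l₂, IsDipath D x y l₁ → IsDipath D x y l₂ → l₁ = l₂

/-- `D` is an orientation of the simple graph `G`. -/
def IsOrientationOf {V : Type} (G : SimpleGraph V) (D : V → V → Prop) : Prop :=
  (∀ a b, D a b → G.Adj a b) ∧ (∀ a b, G.Adj a b → (D a b ∨ D b a)) ∧
    (∀ a b, D a b → ¬ D b a)

/-- A simple graph has the AOP property if it admits an acyclic orientation with at most
one directed path between any ordered pair of vertices. -/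
def HasAOP {V : Type} (G : SimpleGraph V) : Prop :=
  ∃ D : V → V → Prop, IsOrientationOf G D ∧ DigraphAcyclic D ∧ UniqueDipaths D

/-- The tower function: `Tower g x` is `2^(2^(⋯^x))` with `g` twos. -/
def Tower : ℕ → ℕ → ℕ
  | 0, x => x
  | i + 1, x => 2 ^ Tower i x

/-- The graph `G` has degeneracy at most `k`: every nonempty (induced subgraph on a) set
of vertices contains a vertex with at most `k` neighbours inside the set. -/
def DegenLE {V : Type} (G : SimpleGraph V) (k : ℕ) : Prop :=
  ∀ s : Set V, s.Nonempty → ∃ v ∈ s, ({u ∈ s | G.Adj v u} : Set V).ncard ≤ k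

/-- For any orientation `D` of a simple graph `G`,
`χ(G) ≤ 2 ^ χ(L(D))`: if `L(D)` is `k`-colorable then `G` is `2^k`-colorable. -/
theorem stmt_5 {V : Type} [Fintype V] (G : SimpleGraph V) (D : V → V → Prop)
    (hD : IsOrientationOf G D) (k : ℕ) (h : (LineGraph D).Colorable k) :
    G.Colorable (2 ^ k) := by
  classical
  obtain ⟨c⟩ := h
  -- color each vertex by the set of colors of arcs leaving it
  set S : V → Finset (Fin k) := fun v =>
    Finset.univ.filter (fun i => ∃ w, ∃ hw : D v w, c ⟨(v, w), hw⟩ = i) with hS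
  have key : ∀ u v, D u v → S u ≠ S v := by
    intro u v huv heq
    have hmem : c ⟨(u, v), huv⟩ ∈ S u := by
      simp [hS]
      exact ⟨v, huv, rfl⟩
    rw [heq, hS] at hmem
    simp only [Finset.mem_filter, Finset.mem_univ, true_and] at hmem
    obtain ⟨w, hw, hcw⟩ := hmem
    have hadj : (LineGraph D).Adj ⟨(v, w), hw⟩ ⟨(u, v), huv⟩ := by
      refine (SimpleGraph.fromRel_adj _ _ _).mpr ⟨?_, Or.inr rfl⟩
      intro heq'
      have h1 : v = u := congrArg (fun e : Arcs D => e.1.1) heq'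
      subst h1
      exact hD.2.2 _ _ huv huv
    exact c.valid hadj hcw
  have coloring : G.Coloring (Finset (Fin k)) := by
    refine SimpleGraph.Coloring.mk S ?_
    intro u v hadj
    rcases hD.2.1 u v hadj with huv | hvu
    · exact key u v huv
    · exact fun e => key v u hvu e.symm
  have := coloring.colorable
  rwa [Fintype.card_finset, Fintype.card_fin] at this
end

section
/- Let D be any orientation of a simple graph G (not necessarily acyclic), and let k* be the least natural number k such that χ(G) ≤ C(k, ⌊k/2⌋) (binomial coefficient). Then χ(L(D)) ≤ k*. -/
open SimpleGraph

/-- For any orientation `D` of a simple graph `G`,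
`χ(L(D)) ≤ k*`, where `k*` is the least `k` with `χ(G) ≤ C(k, ⌊k/2⌋)`: whenever
`G` is `C(k, ⌊k/2⌋)`-colorable, `L(D)` is `k`-colorable. -/
theorem stmt_6 {V : Type} [Fintype V] (G : SimpleGraph V) (D : V → V → Prop)
    (hD : IsOrientationOf G D) (k : ℕ) (h : G.Colorable (Nat.choose k (k / 2))) :
    (LineGraph D).Colorable k := by
  classical
  obtain ⟨C⟩ := h
  set s : Finset (Finset (Fin k)) := (Finset.univ : Finset (Fin k)).powersetCard (k/2)
    with hs
  have hcard : s.card = k.choose (k/2) := by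
    simp [hs, Finset.card_powersetCard]
  let e : Fin (k.choose (k/2)) ≃ s := (s.equivFin.trans (finCongr hcard)).symm
  let S : Fin (k.choose (k/2)) → Finset (Fin k) := fun i => (e i).1
  have hScard : ∀ i, (S i).card = k/2 := fun i =>
    (Finset.mem_powersetCard.mp (e i).2).2
  have hSinj : Function.Injective S := fun i j hij =>
    e.injective (Subtype.ext hij)
  have key : ∀ (a b : V), D a b → (S (C a) \ S (C b)).Nonempty := by
    intro a b hab
    have hne : C a ≠ C b := C.valid (hD.1 a b hab)
    by_contra hempty
    rw [Finset.not_nonempty_iff_eq_empty, Finset.sdiff_eq_empty_iff_subset] at hempty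
    have := Finset.eq_of_subset_of_card_le hempty (by rw [hScard, hScard])
    exact hne (hSinj this)
  obtain ⟨c, hc⟩ : ∃ c : Arcs D → Fin k,
      ∀ ar : Arcs D, c ar ∈ S (C ar.1.1) ∧ c ar ∉ S (C ar.1.2) :=
    ⟨fun ar => (key ar.1.1 ar.1.2 ar.2).choose,
      fun ar => Finset.mem_sdiff.mp (key ar.1.1 ar.1.2 ar.2).choose_spec⟩
  refine ⟨SimpleGraph.Coloring.mk c ?_⟩
  intro x y hxy
  have hadj : x ≠ y ∧ (LineDigraph D x y ∨ LineDigraph D y x) := by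
    simpa [LineGraph, UG, SimpleGraph.fromRel_adj] using hxy
  have hx := hc x
  have hy := hc y
  obtain ⟨hne, hor | hor⟩ := hadj
  · intro heq
    rw [LineDigraph] at hor
    have hSS : S (C x.1.2) = S (C y.1.1) := by rw [hor]
    rw [hSS, heq] at hx
    exact hx.2 hy.1
  · intro heq
    rw [LineDigraph] at hor
    have hSS : S (C y.1.2) = S (C x.1.1) := by rw [hor]
    rw [hSS, ← heq] at hy
    exact hy.2 hx.1
end

section
/- Let D be an acyclic oriented graph with underlying undirected graph G, and let g ∈ ℕ. Then χ(G) ≤ T_g(χ(L^g(D))), where T_0(x) = x and T_{i+1}(x) = 2^{T_i(x)}; equivalently, χ(L^g(D)) is at least the g-fold iterated base-2 logarithm of χ(G). -/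
open SimpleGraph

/- Colour a vertex `v` by the set of colours of the arcs leaving it. For an arc `a → b`, the
colour of `(a, b)` lies in the set of `a` but not in that of `b`, since every arc leaving `b`
is adjacent to `(a, b)` in the line graph. -/
theorem colorable_ug_two_pow_of_colorable_lineGraph {V : Type} (D : V → V → Prop) {k : ℕ}
    (h : (LineGraph D).Colorable k) : (UG D).Colorable (2 ^ k) := by
  obtain ⟨c⟩ := h
  let outColors (v : V) : Set (Fin k) := c '' {e | e.1.1 = v}
  have outColors_ne {a b : V} (hab : D a b) (hne : a ≠ b) : outColors a ≠ outColors b := by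
    intro heq
    obtain ⟨f, hfb, hcf⟩ : c ⟨(a, b), hab⟩ ∈ outColors b := heq ▸ ⟨_, rfl, rfl⟩
    have hadj : (LineGraph D).Adj ⟨(a, b), hab⟩ f :=
      (fromRel_adj ..).mpr ⟨fun h ↦ hne (by subst h; exact hfb), Or.inl hfb.symm⟩
    exact c.valid hadj hcf.symm
  have hcol : (UG D).Colorable (Fintype.card (Set (Fin k))) :=
    (Coloring.mk outColors fun {v w} hvw ↦ by
      obtain ⟨hne, hvw | hwv⟩ := (fromRel_adj ..).mp hvw
      · exact outColors_ne hvw hne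
      · exact (outColors_ne hwv hne.symm).symm).colorable
  rwa [Fintype.card_set, Fintype.card_fin] at hcol

theorem tower_two_pow (g k : ℕ) : Tower g (2 ^ k) = Tower (g + 1) k := by
  induction g with
  | zero => rfl
  | succ g ih => exact congrArg (2 ^ ·) ih

theorem stmt_7_general {V : Type} (D : V → V → Prop) (g k : ℕ)
    (h : (UG (IterLine V D g).2).Colorable k) :
    (UG D).Colorable (Tower g k) := by
  induction g generalizing k with
  | zero => exact h
  | succ g ih =>
    rw [← tower_two_pow]
    exact ih _ (colorable_ug_two_pow_of_colorable_lineGraph _ h)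

/-- For an acyclic oriented graph `D` with underlying undirected graph
`G` and any `g`, `χ(G) ≤ T_g(χ(L^g(D)))` where `T_0(x) = x`, `T_{i+1}(x) = 2^{T_i(x)}`:
if `L^g(D)` is `k`-colorable then `G` is `T_g(k)`-colorable. -/
theorem stmt_7 {V : Type} [Fintype V] (D : V → V → Prop) (hor : Oriented D)
    (hacyc : DigraphAcyclic D) (g k : ℕ)
    (h : (UG (IterLine V D g).2).Colorable k) :
    (UG D).Colorable (Tower g k) :=
  stmt_7_general D g k h
end

section
/- Let D be an acyclic oriented graph and let g ∈ ℕ. Then the graph L^g(D) contains no odd cycle with fewer than 2g+1 edges; i.e., the odd-girth of L^g(D) is at least 2g+1. -/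
open SimpleGraph

/-!
Every step `e — f` of a walk in `L(D)` is either forward (`head e = tail f`) or backward
(`head f = tail e`), and both `tail` and `head` map `L(D)` homomorphically onto `D`.
In a closed walk the steps cannot all go the same way, since `L(D)` is again acyclic, so two
consecutive steps go opposite ways. A backward-then-forward pair `e — f — e'` has
`tail e = tail e'`, a forward-then-backward pair has `head e = head e'`; mapping the rest of the
walk by `tail` resp. `head` yields a closed walk in `D` shorter by two and of the same parity.
Induction on `g` raises the odd girth by two at each iteration, starting from at least one.
-/

variable {W : Type} {R : W → W → Prop}

theorem DigraphAcyclic.irrefl (h : DigraphAcyclic R) (a : W) : ¬ R a a :=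
  fun ha => h a (.single ha)

theorem LineDigraph.transGen_tail {a b : Arcs R}
    (h : Relation.TransGen (LineDigraph R) a b) : Relation.TransGen R a.1.1 b.1.1 := by
  induction h with
  | single hab => exact .single (hab ▸ a.2)
  | @tail b _ _ hbc ih => exact ih.tail (hbc ▸ b.2)

theorem DigraphAcyclic.lineDigraph (h : DigraphAcyclic R) : DigraphAcyclic (LineDigraph R) :=
  fun e he => h e.1.1 (LineDigraph.transGen_tail he)

theorem DigraphAcyclic.iterLine {V : Type} {D : V → V → Prop} (h : DigraphAcyclic D) :
    ∀ g : ℕ, DigraphAcyclic (IterLine V D g).2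
  | 0 => h
  | g + 1 => (h.iterLine g).lineDigraph

theorem UG.adj_of_rel (hR : ∀ a, ¬ R a a) {a b : W} (h : R a b) : (UG R).Adj a b :=
  (fromRel_adj _ _ _).2 ⟨fun hab => hR a (hab ▸ h), Or.inl h⟩

def tailHom (hR : ∀ a, ¬ R a a) : UG (LineDigraph R) →g UG R where
  toFun e := e.1.1
  map_rel' {e f} h := by
    obtain ⟨-, hef | hfe⟩ := (fromRel_adj _ _ _).1 h
    · rw [← show e.1.2 = f.1.1 from hef]
      exact UG.adj_of_rel hR e.2
    · rw [← show f.1.2 = e.1.1 from hfe]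
      exact (UG.adj_of_rel hR f.2).symm

def headHom (hR : ∀ a, ¬ R a a) : UG (LineDigraph R) →g UG R where
  toFun e := e.1.2
  map_rel' {e f} h := by
    obtain ⟨-, hef | hfe⟩ := (fromRel_adj _ _ _).1 h
    · rw [show e.1.2 = f.1.1 from hef]
      exact UG.adj_of_rel hR f.2
    · rw [show f.1.2 = e.1.1 from hfe]
      exact (UG.adj_of_rel hR e.2).symm

theorem SimpleGraph.Walk.transGen_of_forall_darts {V : Type*} {G : SimpleGraph V}
    {r : V → V → Prop} : ∀ {u v : V} (p : G.Walk u v), ¬ p.Nil →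
      (∀ d ∈ p.darts, r d.fst d.snd) → Relation.TransGen r u v
  | _, _, .nil, hp, _ => (hp .nil).elim
  | _, _, .cons _ .nil, _, hr => .single (hr _ List.mem_cons_self)
  | _, _, .cons _ (.cons h p), _, hr =>
    .head (hr _ List.mem_cons_self)
      ((Walk.cons h p).transGen_of_forall_darts (by simp) fun d hd => hr d (.tail _ hd))

theorem LineDigraph.walk_monotone_or_shortcut (hR : ∀ a, ¬ R a a) {e f : Arcs R}
    (p : (UG (LineDigraph R)).Walk e f) :
    (∀ d ∈ p.darts, LineDigraph R d.fst d.snd) ∨ (∀ d ∈ p.darts, LineDigraph R d.snd d.fst) ∨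
      (∃ q : (UG R).Walk e.1.1 f.1.1, q.length + 2 = p.length) ∨
      (∃ q : (UG R).Walk e.1.2 f.1.2, q.length + 2 = p.length) := by
  induction p with
  | nil => simp
  | @cons e e' f h p ih =>
    rcases ih with hF | hB | ⟨q, hq⟩ | ⟨q, hq⟩
    · obtain ⟨-, hee' | he'e⟩ := (fromRel_adj _ _ _).1 h
      · exact .inl (by simpa [hee'] using hF)
      · cases p with
        | nil => exact .inr (.inl (by simpa using he'e))
        | @cons _ e'' _ h' p =>
          have hfwd : e'.1.2 = e''.1.1 := hF _ List.mem_cons_self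
          have htail : e''.1.1 = e.1.1 := hfwd.symm.trans he'e
          exact .inr (.inr (.inl ⟨(p.map (tailHom hR)).copy htail rfl,
            congrArg (· + 2) ((Walk.length_copy _ _ _).trans (Walk.length_map _ _))⟩))
    · obtain ⟨-, hee' | he'e⟩ := (fromRel_adj _ _ _).1 h
      · cases p with
        | nil => exact .inl (by simpa using hee')
        | @cons _ e'' _ h' p =>
          have hback : e''.1.2 = e'.1.1 := hB _ List.mem_cons_self
          have hhead : e''.1.2 = e.1.2 := hback.trans hee'.symm
          exact .inr (.inr (.inr ⟨(p.map (headHom hR)).copy hhead rfl,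
            congrArg (· + 2) ((Walk.length_copy _ _ _).trans (Walk.length_map _ _))⟩))
      · exact .inr (.inl (by simpa [he'e] using hB))
    · exact .inr (.inr (.inl ⟨.cons ((tailHom hR).map_adj h) q, congrArg (· + 1) hq⟩))
    · exact .inr (.inr (.inr ⟨.cons ((headHom hR).map_adj h) q, congrArg (· + 1) hq⟩))

theorem LineDigraph.exists_closed_walk_length_add_two (hR : DigraphAcyclic R) {e : Arcs R}
    (p : (UG (LineDigraph R)).Walk e e) (hp : ¬ p.Nil) :
    ∃ v, ∃ q : (UG R).Walk v v, q.length + 2 = p.length := by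
  rcases walk_monotone_or_shortcut hR.irrefl p with hF | hB | ⟨q, hq⟩ | ⟨q, hq⟩
  · exact (hR.lineDigraph e (p.transGen_of_forall_darts hp hF)).elim
  · exact (hR.lineDigraph e (Relation.transGen_swap.1 (p.transGen_of_forall_darts hp hB))).elim
  · exact ⟨_, q, hq⟩
  · exact ⟨_, q, hq⟩

theorem LineDigraph.add_two_le_of_odd_length (hR : DigraphAcyclic R) {k : ℕ}
    (hk : ∀ (v : W) (q : (UG R).Walk v v), Odd q.length → k ≤ q.length)
    {e : Arcs R} (p : (UG (LineDigraph R)).Walk e e) (hodd : Odd p.length) :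
    k + 2 ≤ p.length := by
  obtain ⟨v, q, hq⟩ :=
    exists_closed_walk_length_add_two hR p (Walk.not_nil_iff_lt_length.2 hodd.pos)
  have hqodd : Odd q.length := by
    rw [← hq] at hodd
    exact (Nat.odd_add.1 hodd).2 even_two
  have := hk v q hqodd
  omega

theorem stmt_9_general {V : Type} (D : V → V → Prop)
    (hacyc : DigraphAcyclic D) (g : ℕ)
    (x : (IterLine V D g).1) (w : (UG (IterLine V D g).2).Walk x x)
    (hlen : Odd w.length) :
    2 * g + 1 ≤ w.length := by
  induction g with
  | zero => exact hlen.pos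
  | succ g ih =>
    exact LineDigraph.add_two_le_of_odd_length (hacyc.iterLine g) ih w hlen

/-- For any acyclic oriented graph `D` and any `g`, the graph
`L^g(D)` has no odd cycle with fewer than `2g + 1` edges. -/
theorem stmt_9 {V : Type} [Fintype V] (D : V → V → Prop) (hor : Oriented D)
    (hacyc : DigraphAcyclic D) (g : ℕ)
    (x : (IterLine V D g).1) (w : (UG (IterLine V D g).2).Walk x x)
    (hw : w.IsCycle) (hlen : Odd w.length) :
    2 * g + 1 ≤ w.length :=
  stmt_9_general D hacyc g x w hlen
end

section
/- Let n ∈ ℕ, let a, b ≥ 1, and let H be an induced subgraph of the shift graph G_{n,2} that contains no induced subgraph isomorphic to the complete bipartite graph K_{a,b}. Then χ(H) ≤ k*, where k* is the least natural number k with a + b ≤ C(k, ⌊k/2⌋) (binomial coefficient); in particular χ(H) = O(log(a+b)). -/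
open SimpleGraph

/-!
Read `S` as an acyclic digraph on `Fin n` with arcs `i → j` for `(i, j) ∈ S`; the induced
subgraph of the shift graph is its line graph, two arcs being adjacent when the head of one is
the tail of the other. The in-arcs and the out-arcs at a vertex `j` induce a complete bipartite
graph, so every vertex has in-degree `< a` or out-degree `< b`. Colouring the vertices of the
first kind greedily with `a` colours in increasing order, and those of the second kind with `b`
colours in decreasing order, properly colours the digraph with `a + b` colours. Replacing the
colours by distinct `k / 2`-subsets `F v` of `Fin k`, which form an antichain, an arc `u → v`
can be coloured by an element of `F u \ F v`; consecutive arcs `u → v → w` then get colours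
outside and inside `F v` respectively.
-/

section LineGraphColoring

variable {W V : Type*} {G : SimpleGraph W} {tail head : W → V}

theorem colorable_of_forall_not_subset {k : ℕ}
    (hadj : ∀ x y, G.Adj x y → head x = tail y ∨ head y = tail x)
    (F : V → Finset (Fin k)) (hF : ∀ x, ¬ F (tail x) ⊆ F (head x)) : G.Colorable k := by
  choose col hcol using fun x => Finset.sdiff_nonempty.2 (hF x)
  simp only [Finset.mem_sdiff] at hcol
  refine ⟨Coloring.mk col fun {x y} hxy hxy' => ?_⟩
  rcases hadj x y hxy with h | h
  · exact (hcol x).2 (by rw [h, hxy']; exact (hcol y).1)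
  · exact (hcol y).2 (by rw [h, ← hxy']; exact (hcol x).1)

theorem colorable_of_forall_ne_of_card_le_choose {α : Type*} [Fintype α]
    (hadj : ∀ x y, G.Adj x y → head x = tail y ∨ head y = tail x)
    (c : V → α) (hc : ∀ x, c (tail x) ≠ c (head x)) {k : ℕ}
    (hk : Fintype.card α ≤ k.choose (k / 2)) : G.Colorable k := by
  obtain ⟨ψ⟩ : Nonempty (α ↪ (Finset.univ : Finset (Fin k)).powersetCard (k / 2)) := by
    rw [Function.Embedding.nonempty_iff_card_le]
    simpa using hk
  have hψ (i : α) : (ψ i : Finset (Fin k)).card = k / 2 := (Finset.mem_powersetCard.1 (ψ i).2).2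
  refine colorable_of_forall_not_subset hadj (fun v => ψ (c v)) fun x hsub => hc x ?_
  exact ψ.injective <| Subtype.ext <| Finset.eq_of_subset_of_card_le hsub (by rw [hψ, hψ])

end LineGraphColoring

theorem exists_coloring_of_wellFounded {V : Type*} {r : V → V → Prop} (hr : WellFounded r)
    {m : ℕ} (hdeg : ∀ v, {u | r u v}.encard < m) :
    ∃ c : V → Fin m, ∀ u v, r u v → c u ≠ c v := by
  have exists_free (v : V) (col : ∀ u, r u v → Fin m) : ∃ i, ∀ u hu, col u hu ≠ i := by
    by_contra! h
    have hsurj : Function.Surjective fun u : {u | r u v} => col u u.2 := fun i => by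
      obtain ⟨u, hu, rfl⟩ := h i
      exact ⟨⟨u, hu⟩, rfl⟩
    have hfin : {u | r u v}.Finite := Set.encard_lt_top_iff.1 ((hdeg v).trans_le le_top)
    have := hfin.to_subtype
    have hle := Nat.card_le_card_of_surjective _ hsurj
    rw [Nat.card_eq_fintype_card, Fintype.card_fin, Nat.card_coe_set_eq] at hle
    have hlt := hdeg v
    rw [← hfin.cast_ncard_eq, Nat.cast_lt] at hlt
    exact hlt.not_ge hle
  let c := hr.fix fun v col => (exists_free v col).choose
  refine ⟨c, fun u v huv => ?_⟩
  have hc : c v = (exists_free v fun u _ => c u).choose := hr.fix_eq _ v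
  rw [hc]
  exact (exists_free v fun u _ => c u).choose_spec u huv

theorem exists_sum_coloring_of_ncard_lt {V : Type*} [LinearOrder V] [Finite V]
    {R : V → V → Prop} (hR : ∀ u v, R u v → u < v) {a b : ℕ} (ha : 0 < a) (hb : 0 < b)
    (hdeg : ∀ v, {u | R u v}.ncard < a ∨ {w | R v w}.ncard < b) :
    ∃ c : V → Fin a ⊕ Fin b, ∀ u v, R u v → c u ≠ c v := by
  let A := {v | {u | R u v}.ncard < a}
  have hencard {s t : Set V} {m : ℕ} (hst : s ⊆ t) (ht : t.ncard < m) : s.encard < m := by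
    rw [← (Set.toFinite s).cast_ncard_eq, Nat.cast_lt]
    exact (Set.ncard_le_ncard hst).trans_lt ht
  obtain ⟨cA, hcA⟩ := exists_coloring_of_wellFounded (r := fun u v => R u v ∧ v ∈ A)
    (Subrelation.wf (fun h => hR _ _ h.1) wellFounded_lt) (m := a) fun v => by
      by_cases hv : v ∈ A
      · exact hencard (fun u hu => hu.1) hv
      · simp [hv, ha]
  obtain ⟨cB, hcB⟩ := exists_coloring_of_wellFounded (r := fun w v => R v w ∧ v ∉ A)
    (Subrelation.wf (fun h => hR _ _ h.1) wellFounded_gt) (m := b) fun v => by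
      by_cases hv : v ∈ A
      · simp [hv, hb]
      · exact hencard (fun u hu => hu.1) ((hdeg v).resolve_left hv)
  refine ⟨fun v => if v ∈ A then .inl (cA v) else .inr (cB v), fun u v huv => ?_⟩
  by_cases hu : u ∈ A <;> by_cases hv : v ∈ A <;> simp [hu, hv]
  · exact hcA u v ⟨huv, hv⟩
  · exact (hcB v u ⟨huv, hu⟩).symm

theorem SimpleGraph.nonempty_completeBipartiteGraph_embedding {α β V : Type*}
    {G : SimpleGraph V} (f : α ↪ V) (g : β ↪ V) (hf : ∀ x y, ¬ G.Adj (f x) (f y))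
    (hg : ∀ x y, ¬ G.Adj (g x) (g y)) (hfg : ∀ x y, G.Adj (f x) (g y)) :
    Nonempty (completeBipartiteGraph α β ↪g G) := by
  refine ⟨⟨⟨Sum.elim f g, ?_⟩, ?_⟩⟩
  · rintro (x | x) (y | y) h
    · exact congrArg Sum.inl (f.injective h)
    · exact absurd h (hfg x y).ne
    · exact absurd h.symm (hfg y x).ne
    · exact congrArg Sum.inr (g.injective h)
  · rintro (x | x) (y | y)
    · exact iff_of_false (hf x y) (by simp)
    · exact iff_of_true (hfg x y) (by simp)
    · exact iff_of_true (hfg y x).symm (by simp)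
    · exact iff_of_false (hg x y) (by simp)

theorem Set.Finite.nonempty_fin_embedding_of_le_ncard {α : Type*} {s : Set α} (hs : s.Finite)
    {m : ℕ} (h : m ≤ s.ncard) : Nonempty (Fin m ↪ s) := by
  have := hs.fintype
  rwa [Function.Embedding.nonempty_iff_card_le, Fintype.card_fin, ← Nat.card_eq_fintype_card]

theorem shiftGraph_adj {n : ℕ} {x y : {p : Fin n × Fin n // p.1 < p.2}} :
    (ShiftGraph n).Adj x y ↔ x ≠ y ∧ (x.1.2 = y.1.1 ∨ y.1.2 = x.1.1) :=
  Iff.rfl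

def ShiftArc {n : ℕ} (S : Set {p : Fin n × Fin n // p.1 < p.2}) (u v : Fin n) : Prop :=
  ∃ h : u < v, ⟨(u, v), h⟩ ∈ S

theorem nonempty_completeBipartiteGraph_embedding_shiftGraph {n a b : ℕ}
    {S : Set {p : Fin n × Fin n // p.1 < p.2}} {j : Fin n}
    (hin : a ≤ {i | ShiftArc S i j}.ncard) (hout : b ≤ {l | ShiftArc S j l}.ncard) :
    Nonempty (completeBipartiteGraph (Fin a) (Fin b) ↪g (ShiftGraph n).induce S) := by
  obtain ⟨p⟩ := (Set.toFinite _).nonempty_fin_embedding_of_le_ncard hin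
  obtain ⟨q⟩ := (Set.toFinite _).nonempty_fin_embedding_of_le_ncard hout
  let inArc : {i | ShiftArc S i j} ↪ S :=
    ⟨fun i => ⟨⟨(i, j), i.2.1⟩, i.2.2⟩, fun i i' h => by simpa [Subtype.ext_iff] using h⟩
  let outArc : {l | ShiftArc S j l} ↪ S :=
    ⟨fun l => ⟨⟨(j, l), l.2.1⟩, l.2.2⟩, fun l l' h => by simpa [Subtype.ext_iff] using h⟩
  refine nonempty_completeBipartiteGraph_embedding (p.trans inArc) (q.trans outArc) ?_ ?_ ?_
  · rintro x y ⟨-, h | h⟩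
    · exact (p y).2.1.ne' h
    · exact (p x).2.1.ne' h
  · rintro x y ⟨-, h | h⟩
    · exact (q x).2.1.ne' h
    · exact (q y).2.1.ne' h
  · refine fun x y => ⟨fun h => ?_, .inl rfl⟩
    have h₁ := congrArg (fun e : {p : Fin n × Fin n // p.1 < p.2} => e.1.1) h
    exact (p x).2.1.ne h₁

/-- Any induced subgraph `H` of the shift graph `G_{n,2}` with no
induced copy of `K_{a,b}` (`a, b ≥ 1`) satisfies `χ(H) ≤ k*`, where `k*` is the least
`k` with `a + b ≤ C(k, ⌊k/2⌋)`: for every such `k`, `H` is `k`-colorable. -/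
theorem stmt_10 (n a b : ℕ) (ha : 1 ≤ a) (hb : 1 ≤ b)
    (S : Set {p : Fin n × Fin n // p.1 < p.2})
    (hfree : IsEmpty
      (completeBipartiteGraph (Fin a) (Fin b) ↪g (ShiftGraph n).induce S))
    (k : ℕ) (hk : a + b ≤ Nat.choose k (k / 2)) :
    ((ShiftGraph n).induce S).Colorable k := by
  have hdeg (j : Fin n) : {i | ShiftArc S i j}.ncard < a ∨ {l | ShiftArc S j l}.ncard < b := by
    by_contra! h
    obtain ⟨e⟩ := nonempty_completeBipartiteGraph_embedding_shiftGraph h.1 h.2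
    exact hfree.false e
  obtain ⟨c, hc⟩ := exists_sum_coloring_of_ncard_lt (R := ShiftArc S) (fun _ _ h => h.1) ha hb hdeg
  refine colorable_of_forall_ne_of_card_le_choose (tail := fun x : S => x.1.1.1)
    (head := fun x => x.1.1.2) (fun x y h => (shiftGraph_adj.1 h).2) c
    (fun x => hc _ _ ⟨x.1.2, x.2⟩) ?_
  simpa using hk
end

section
/- Let a, b ≥ 1 and let D be an acyclic oriented graph such that the undirected line graph L(D) contains no subgraph isomorphic to the complete bipartite graph K_{a,b}. Then the underlying undirected graph G of D satisfies χ(G) ≤ a + b; indeed, the vertex set of G can be partitioned into a set inducing a subgraph of degeneracy at most b−1 and a set inducing a subgraph of degeneracy at most a−1. -/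
open SimpleGraph

/-!
At a vertex `v` with `a` in-neighbours and `b` out-neighbours, the incoming and the outgoing
arcs at `v` span a `K_{a,b}` in `L(D)`; so every vertex has in-degree `< a` or out-degree `< b`.
Let `A` be the set of vertices of out-degree `< b`. A `D`-minimal vertex of a nonempty `s ⊆ A`
has only out-neighbours in `s`, hence fewer than `b` neighbours there: `G[A]` is
`(b - 1)`-degenerate, so greedily `b`-colourable. Reversing `D`, `G[Aᶜ]` is `(a - 1)`-degenerate,
and colouring `A` and `Aᶜ` from disjoint palettes uses `a + b` colours.
-/

open Relation

variable {V : Type}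

theorem UG_adj {D : V → V → Prop} {u v : V} : (UG D).Adj u v ↔ u ≠ v ∧ (D u v ∨ D v u) :=
  Iff.rfl

theorem UG_swap (D : V → V → Prop) : UG (Function.swap D) = UG D := by
  ext u v
  simp only [UG_adj, Function.swap, or_comm]

theorem DigraphAcyclic.swap {D : V → V → Prop} (h : DigraphAcyclic D) :
    DigraphAcyclic (Function.swap D) :=
  fun v hv => h v (transGen_swap.mp hv)

theorem DigraphAcyclic.wellFounded [Finite V] {D : V → V → Prop} (h : DigraphAcyclic D) :
    WellFounded D :=
  haveI : Std.Irrefl (TransGen D) := ⟨h⟩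
  (Finite.wellFounded_of_trans_of_irrefl (TransGen D)).mono fun _ _ => TransGen.single

namespace SimpleGraph

/-- The subgraph induced on `S` has degeneracy `< k`; phrasing it with `<` lets `k = 0`
(forcing `S = ∅`) through without a special case. -/
def DegenLTOn (G : SimpleGraph V) (S : Set V) (k : ℕ) : Prop :=
  ∀ s ⊆ S, s.Nonempty → ∃ v ∈ s, {u ∈ s | G.Adj v u}.ncard < k

variable {G : SimpleGraph V} {S : Set V} {k : ℕ}

theorem DegenLTOn.degenLE_induce [Finite V] (h : G.DegenLTOn S k) :
    DegenLE (G.induce S) (k - 1) := by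
  intro t ht
  obtain ⟨_, ⟨v, hvt, rfl⟩, hv⟩ := h _ (by rintro _ ⟨u, -, rfl⟩; exact u.2) (ht.image _)
  refine ⟨v, hvt, ?_⟩
  have : {u ∈ t | (G.induce S).Adj v u}.ncard ≤ {u ∈ Subtype.val '' t | G.Adj v u}.ncard := by
    rw [← Set.ncard_image_of_injective _ Subtype.val_injective]
    refine Set.ncard_le_ncard ?_ (Set.toFinite _)
    rintro _ ⟨u, ⟨hut, hadj⟩, rfl⟩
    exact ⟨⟨u, hut, rfl⟩, hadj⟩
  omega

theorem DegenLTOn.exists_natColoring [Finite V] (h : G.DegenLTOn S k) :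
    ∃ C : V → ℕ, (∀ v ∈ S, C v < k) ∧ ∀ x ∈ S, ∀ y ∈ S, G.Adj x y → C x ≠ C y := by
  classical
  induction S using WellFoundedLT.induction with
  | ind S ih =>
  rcases S.eq_empty_or_nonempty with rfl | hne
  · exact ⟨0, by simp, by simp⟩
  obtain ⟨v, hvS, hv⟩ := h S subset_rfl hne
  obtain ⟨C, hCk, hC⟩ := ih (S \ {v}) (Set.sdiff_singleton_ssubset.2 hvS)
    fun s hs => h s (hs.trans Set.sdiff_subset)
  obtain ⟨c, hck, hc⟩ : ∃ c ∈ Set.Iio k, c ∉ C '' {u ∈ S | G.Adj v u} :=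
    Set.exists_mem_notMem_of_ncard_lt_ncard
      ((Set.ncard_image_le (Set.toFinite _)).trans_lt (by simpa using hv)) (Set.toFinite _)
  refine ⟨Function.update C v c, fun u hu => ?_, fun x hx y hy hxy => ?_⟩
  · rcases eq_or_ne u v with rfl | huv
    · simpa using hck
    · simpa [huv] using hCk u ⟨hu, huv⟩
  rcases eq_or_ne x v with rfl | hxv
  · simpa [(G.ne_of_adj hxy).symm] using fun h => hc ⟨y, ⟨hy, hxy⟩, h.symm⟩
  rcases eq_or_ne y v with rfl | hyv
  · simpa [hxv] using fun h => hc ⟨x, ⟨hx, hxy.symm⟩, h⟩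
  · simpa [hxv, hyv] using hC x ⟨hx, hxv⟩ y ⟨hy, hyv⟩ hxy

theorem DegenLTOn.colorable_induce [Finite V] (h : G.DegenLTOn S k) :
    (G.induce S).Colorable k := by
  obtain ⟨C, hCk, hC⟩ := h.exists_natColoring
  exact ⟨.mk (fun v => ⟨C v, hCk v v.2⟩) fun {v w} hvw => by
    simpa [Fin.ext_iff] using hC v v.2 w w.2 hvw⟩

theorem Colorable.add_of_induce_compl {m n : ℕ}
    (hS : (G.induce S).Colorable m) (hSc : (G.induce Sᶜ).Colorable n) : G.Colorable (m + n) := by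
  classical
  obtain ⟨C₁⟩ := hS
  obtain ⟨C₂⟩ := hSc
  let C : G.Coloring (Fin m ⊕ Fin n) := .mk
    (fun v => if hv : v ∈ S then .inl (C₁ ⟨v, hv⟩) else .inr (C₂ ⟨v, hv⟩))
    fun {x y} hxy => by
      split_ifs with hx hy hy
      · simpa using C₁.valid (show (G.induce S).Adj ⟨x, hx⟩ ⟨y, hy⟩ from hxy)
      · simp
      · simp
      · simpa using C₂.valid (show (G.induce Sᶜ).Adj ⟨x, hx⟩ ⟨y, hy⟩ from hxy)
  simpa using C.colorable

end SimpleGraph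

theorem degenLTOn_of_outDegree_lt [Finite V] {D : V → V → Prop} (hD : DigraphAcyclic D)
    {S : Set V} {b : ℕ} (hS : ∀ v ∈ S, {u | D v u}.ncard < b) : (UG D).DegenLTOn S b := by
  intro s hsS hs
  obtain ⟨v, hvs, hmin⟩ := hD.wellFounded.has_min s hs
  refine ⟨v, hvs, (Set.ncard_le_ncard ?_ (Set.toFinite _)).trans_lt (hS v (hsS hvs))⟩
  rintro u ⟨hus, hadj⟩
  exact (UG_adj.1 hadj).2.resolve_right (hmin u hus)

theorem inDegree_lt_or_outDegree_lt [Fintype V] {a b : ℕ} {D : V → V → Prop} (hD : Oriented D)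
    (hfree : ¬ ∃ f : completeBipartiteGraph (Fin a) (Fin b) →g LineGraph D,
      Function.Injective f) (v : V) :
    {u | D u v}.ncard < a ∨ {u | D v u}.ncard < b := by
  classical
  have emb {n : ℕ} {s : Set V} (h : n ≤ s.ncard) : Nonempty (Fin n ↪ s) :=
    Function.Embedding.nonempty_of_card_le (by simpa [Set.ncard_eq_toFinset_card'] using h)
  by_contra! h
  obtain ⟨ga⟩ := emb h.1
  obtain ⟨gb⟩ := emb h.2
  let f : Fin a ⊕ Fin b → Arcs D :=
    Sum.elim (fun i => ⟨(ga i, v), (ga i).2⟩) (fun j => ⟨(v, gb j), (gb j).2⟩)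
  have tail_ne_head (e : Arcs D) : e.1.1 ≠ e.1.2 := fun h => hD.1 _ (h ▸ e.2)
  have hf : Function.Injective f := by
    rintro (i | j) (i' | j') he
    · exact congrArg Sum.inl (ga.injective (Subtype.ext congr($he.1.1)))
    · exact (tail_ne_head (f (.inl i)) congr($he.1.1)).elim
    · exact (tail_ne_head (f (.inl i')) congr($he.1.1).symm).elim
    · exact congrArg Sum.inr (gb.injective (Subtype.ext congr($he.1.2)))
  refine hfree ⟨⟨f, ?_⟩, hf⟩
  rintro (i | j) (i' | j') hadj
  · simp [completeBipartiteGraph] at hadj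
  · exact ⟨hf.ne (by simp), Or.inl rfl⟩
  · exact ⟨hf.ne (by simp), Or.inr rfl⟩
  · simp [completeBipartiteGraph] at hadj

theorem stmt_11_general {V : Type} [Fintype V] (a b : ℕ)
    (D : V → V → Prop) (hor : Oriented D) (hacyc : DigraphAcyclic D)
    (hfree : ¬ ∃ f : completeBipartiteGraph (Fin a) (Fin b) →g LineGraph D,
      Function.Injective f) :
    (UG D).Colorable (a + b) ∧
      ∃ A : Set V, DegenLE ((UG D).induce A) (b - 1) ∧
        DegenLE ((UG D).induce (Aᶜ : Set V)) (a - 1) := by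
  let A : Set V := {v | {u | D v u}.ncard < b}
  have hA : (UG D).DegenLTOn A b := degenLTOn_of_outDegree_lt hacyc fun _ hv => hv
  have hAc : (UG D).DegenLTOn Aᶜ a := by
    rw [← UG_swap]
    exact degenLTOn_of_outDegree_lt hacyc.swap fun v hv =>
      (inDegree_lt_or_outDegree_lt hor hfree v).resolve_right hv
  refine ⟨?_, A, hA.degenLE_induce, hAc.degenLE_induce⟩
  rw [add_comm]
  exact hA.colorable_induce.add_of_induce_compl hAc.colorable_induce

/-- Let `a, b ≥ 1` and let `D` be an acyclic oriented graph such that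
`L(D)` contains no subgraph isomorphic to `K_{a,b}`. Then the underlying undirected
graph `G` of `D` satisfies `χ(G) ≤ a + b`; indeed `V(G)` can be partitioned into a set
inducing a subgraph of degeneracy at most `b - 1` and a set inducing a subgraph of
degeneracy at most `a - 1`. -/
theorem stmt_11 {V : Type} [Fintype V] (a b : ℕ) (ha : 1 ≤ a) (hb : 1 ≤ b)
    (D : V → V → Prop) (hor : Oriented D) (hacyc : DigraphAcyclic D)
    (hfree : ¬ ∃ f : completeBipartiteGraph (Fin a) (Fin b) →g LineGraph D,
      Function.Injective f) :
    (UG D).Colorable (a + b) ∧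
      ∃ A : Set V, DegenLE ((UG D).induce A) (b - 1) ∧
        DegenLE ((UG D).induce (Aᶜ : Set V)) (a - 1) :=
  stmt_11_general a b D hor hacyc hfree
end

section
/- Let g ≥ 5 be odd and let G be the graph consisting of a cycle u_1, …, u_g of length g together with g additional pairwise non-adjacent vertices u'_1, …, u'_g, where each u'_i is adjacent exactly to the two neighbors of u_i on the cycle. Then G has odd-girth equal to g and G does not have the AOP property. -/
open SimpleGraph

/-- The relation generating the graph of Theorem `high odd girth graphs not in AOP`:
the vertices are `Fin g ⊕ Fin g`, where `Sum.inl i` is the cycle vertex `u_i` and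
`Sum.inr i` is the extra vertex `u'_i`; consecutive cycle vertices are related, and
`u'_i` is related to the two cyclic neighbours `u_{i+1}` and `u_{i-1}` of `u_i`. -/
def paperRel (g : ℕ) : (Fin g ⊕ Fin g) → (Fin g ⊕ Fin g) → Prop
  | Sum.inl i, Sum.inl j => (j : ℕ) = ((i : ℕ) + 1) % g
  | Sum.inr i, Sum.inl j => (j : ℕ) = ((i : ℕ) + 1) % g ∨ ((j : ℕ) + 1) % g = (i : ℕ)
  | _, _ => False

/-- The graph consisting of a `g`-cycle `u_1, …, u_g` together with `g` pairwise
non-adjacent extra vertices `u'_1, …, u'_g`, where `u'_i` is adjacent exactly to the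
two neighbours of `u_i` on the cycle. -/
def paperGraph (g : ℕ) : SimpleGraph (Fin g ⊕ Fin g) :=
  SimpleGraph.fromRel (paperRel g)

/-!
Identifying every `u'_i` with `u_i` is a homomorphism onto the cycle `C_g`, and a closed walk in
`C_g` shorter than `g` makes as many steps up as down, so it has even length; the `g`-cycle itself
lies in the graph. For AOP: around the odd cycle the orientations of consecutive edges cannot
alternate, so some `u_{i-1} → u_i → u_{i+1}` is a directed path. Its ends are the neighbours of
`u'_i`, and however the two edges at `u'_i` are oriented they close a directed cycle or produce a
second directed path between the same two vertices.
-/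

open Fin.CommRing

namespace SimpleGraph

variable {n : ℕ} [NeZero n] {u v : Fin n}

lemma cycleGraph.eq_add_one_or_eq_add_one_of_adj (h : (cycleGraph n).Adj u v) :
    v = u + 1 ∨ u = v + 1 := by
  rcases cycleGraph_adj'.mp h with h | h
  · exact .inr (sub_eq_iff_eq_add'.mp (by rw [← Fin.cast_val_eq_self (u - v), h, Nat.cast_one]))
  · exact .inl (sub_eq_iff_eq_add'.mp (by rw [← Fin.cast_val_eq_self (v - u), h, Nat.cast_one]))

lemma cycleGraph_adj_of_eq_add_one (hn : 2 ≤ n) (h : v = u + 1) : (cycleGraph n).Adj u v :=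
  cycleGraph_adj'.mpr (.inr (by simp [h, Nat.mod_eq_of_lt hn]))

-- `a` counts the steps `x → x + 1` of the walk and `b` the steps `x + 1 → x`.
lemma cycleGraph.exists_up_down_steps (w : (cycleGraph n).Walk u v) :
    ∃ a b : ℕ, a + b = w.length ∧ v + (b : Fin n) = u + a := by
  induction w with
  | nil => exact ⟨0, 0, rfl, by simp⟩
  | cons h _ ih =>
    obtain ⟨a, b, hlen, hv⟩ := ih
    rcases cycleGraph.eq_add_one_or_eq_add_one_of_adj h with rfl | rfl
    · exact ⟨a + 1, b, by simp [← hlen]; omega, by rw [Nat.cast_succ, hv]; ring⟩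
    · exact ⟨a, b + 1, by simp [← hlen]; omega, by rw [Nat.cast_succ, ← add_assoc, hv]; ring⟩

lemma cycleGraph.le_length_of_odd {w : (cycleGraph n).Walk v v} (hw : Odd w.length) :
    n ≤ w.length := by
  obtain ⟨a, b, hlen, hv⟩ := cycleGraph.exists_up_down_steps w
  by_contra! hlt
  have hba : b % n = a % n := by
    simpa [Fin.ext_iff, Fin.val_natCast] using add_left_cancel hv
  rw [Nat.mod_eq_of_lt (by omega), Nat.mod_eq_of_lt (by omega)] at hba
  exact Nat.not_odd_iff_even.mpr ⟨a, by omega⟩ hw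

end SimpleGraph

section AOP

variable {V : Type} {G : SimpleGraph V} {D : V → V → Prop}

lemma IsOrientationOf.not_acyclic_and_uniqueDipaths_of_common_neighbor
    (hD : IsOrientationOf G D) {a b c p : V} (hab : D a b) (hbc : D b c)
    (hpa : G.Adj p a) (hpc : G.Adj p c) (hac : a ≠ c) (hpb : p ≠ b) :
    ¬ (DigraphAcyclic D ∧ UniqueDipaths D) := by
  rintro ⟨hacyc, huniq⟩
  obtain ⟨harc, hedge, -⟩ := hD
  have hab' := (harc a b hab).ne
  have hbc' := (harc b c hbc).ne
  have hpa' := hpa.ne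
  have hpc' := hpc.ne
  rcases hedge p a hpa with hpa | hap <;> rcases hedge p c hpc with hpc | hcp
  · have := huniq p c [p, c] [p, a, b, c]
      ⟨.cons_cons hpc (.singleton _), rfl, rfl, by simp [hpc']⟩
      ⟨.cons_cons hpa (.cons_cons hab (.cons_cons hbc (.singleton _))), rfl, rfl, by simp [*]⟩
    simp at this
  · exact hacyc p (.head hpa (.head hab (.head hbc (.single hcp))))
  · have := huniq a c [a, b, c] [a, p, c]
      ⟨.cons_cons hab (.cons_cons hbc (.singleton _)), rfl, rfl, by simp [*]⟩
      ⟨.cons_cons hap (.cons_cons hpc (.singleton _)), rfl, rfl, by simp [*, hpa'.symm]⟩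
    simp [hpb.symm] at this
  · have := huniq a p [a, p] [a, b, c, p]
      ⟨.cons_cons hap (.singleton _), rfl, rfl, by simp [hpa'.symm]⟩
      ⟨.cons_cons hab (.cons_cons hbc (.cons_cons hcp (.singleton _))), rfl, rfl,
        by simp [*, hpa'.symm, hpb.symm, hpc'.symm]⟩
    simp at this

end AOP

lemma Fin.exists_iff_add_one_of_odd {g : ℕ} [NeZero g] (hg : Odd g) (P : Fin g → Prop) :
    ∃ i, P i ↔ P (i + 1) := by
  by_contra! h
  have hpar : ∀ k : ℕ, P k ↔ (P 0 ↔ Even k) := by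
    intro k
    induction k with
    | zero => simp
    | succ k ih =>
      rw [Nat.cast_succ, Nat.even_add_one]
      have := h k
      tauto
  have := hpar g
  simp only [Fin.natCast_self, Nat.not_even_iff_odd.mpr hg] at this
  tauto

namespace paperGraph

@[simp] lemma not_rel_inl_inr {g : ℕ} {i j : Fin g} : ¬ paperRel g (.inl i) (.inr j) := id

@[simp] lemma not_rel_inr_inr {g : ℕ} {i j : Fin g} : ¬ paperRel g (.inr i) (.inr j) := id

lemma not_adj_inr_inr {g : ℕ} {i j : Fin g} : ¬ (paperGraph g).Adj (.inr i) (.inr j) := by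
  simp [paperGraph]

variable {g : ℕ} [NeZero g] {i j : Fin g}

@[simp] lemma rel_inl_inl : paperRel g (.inl i) (.inl j) ↔ j = i + 1 := by
  simp [paperRel, Fin.ext_iff, Fin.val_add]

@[simp] lemma rel_inr_inl : paperRel g (.inr i) (.inl j) ↔ j = i + 1 ∨ j + 1 = i := by
  simp [paperRel, Fin.ext_iff, Fin.val_add]

lemma adj_inl_inl :
    (paperGraph g).Adj (.inl i) (.inl j) ↔ i ≠ j ∧ (j = i + 1 ∨ i = j + 1) := by
  simp [paperGraph]

lemma adj_inr_inl : (paperGraph g).Adj (.inr i) (.inl j) ↔ j = i + 1 ∨ j + 1 = i := by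
  simp [paperGraph]

def fold (hg : 2 ≤ g) : paperGraph g →g cycleGraph g where
  toFun := Sum.elim id id
  map_rel' {x y} h := by
    have step {i j : Fin g} (h : j = i + 1 ∨ i = j + 1) : (cycleGraph g).Adj i j := by
      rcases h with h | h
      · exact cycleGraph_adj_of_eq_add_one hg h
      · exact (cycleGraph_adj_of_eq_add_one hg h).symm
    rcases x with i | i <;> rcases y with j | j
    · exact step (adj_inl_inl.mp h).2
    · exact (step ((adj_inr_inl.mp h.symm).imp id Eq.symm)).symm
    · exact step ((adj_inr_inl.mp h).imp id Eq.symm)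
    · exact absurd h not_adj_inr_inr

def cycleCopy : Copy (cycleGraph g) (paperGraph g) :=
  Hom.toCopy ⟨Sum.inl, fun h => adj_inl_inl.mpr
    ⟨h.ne, cycleGraph.eq_add_one_or_eq_add_one_of_adj h⟩⟩ Sum.inl_injective

lemma le_length_of_odd (hg : 2 ≤ g) {v : Fin g ⊕ Fin g} {w : (paperGraph g).Walk v v}
    (hw : Odd w.length) : g ≤ w.length := by
  simpa using cycleGraph.le_length_of_odd (w := w.map (fold hg)) (by simpa using hw)

lemma exists_isCycle_length_eq (hg : 3 ≤ g) :
    ∃ (v : Fin g ⊕ Fin g) (w : (paperGraph g).Walk v v), w.IsCycle ∧ w.length = g :=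
  (cycleGraph_isContained_iff (by omega)).mp ⟨cycleCopy⟩

lemma not_hasAOP (hg : 3 ≤ g) (hodd : Odd g) : ¬ HasAOP (paperGraph g) := by
  rintro ⟨D, hD, hDaop⟩
  have succ_ne (i : Fin g) : i ≠ i + 1 := by
    simp [Fin.ext_iff, Nat.mod_eq_of_lt (show 1 < g by omega)]
  have back (i : Fin g) (h : ¬ D (.inl i) (.inl (i + 1))) : D (.inl (i + 1)) (.inl i) :=
    (hD.2.1 _ _ (adj_inl_inl.mpr ⟨succ_ne i, .inl rfl⟩)).resolve_left h
  obtain ⟨i, hi⟩ := Fin.exists_iff_add_one_of_odd hodd fun i => D (.inl i) (.inl (i + 1))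
  have hac : (.inl i : Fin g ⊕ Fin g) ≠ .inl (i + 1 + 1) := by
    simp [add_assoc, one_add_one_eq_two, Fin.ext_iff, Nat.mod_eq_of_lt (show 2 < g by omega)]
  have hpa : (paperGraph g).Adj (.inr (i + 1)) (.inl i) := adj_inr_inl.mpr (.inr rfl)
  have hpc : (paperGraph g).Adj (.inr (i + 1)) (.inl (i + 1 + 1)) := adj_inr_inl.mpr (.inl rfl)
  have hpb : (.inr (i + 1) : Fin g ⊕ Fin g) ≠ .inl (i + 1) := Sum.inr_ne_inl
  by_cases hfwd : D (.inl i) (.inl (i + 1))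
  · exact hD.not_acyclic_and_uniqueDipaths_of_common_neighbor hfwd (hi.mp hfwd) hpa hpc hac hpb
      hDaop
  · exact hD.not_acyclic_and_uniqueDipaths_of_common_neighbor (back _ (mt hi.mpr hfwd))
      (back _ hfwd) hpc hpa hac.symm hpb hDaop

end paperGraph

/-- For odd `g ≥ 5`, the graph above has odd-girth equal to `g`
(every odd cycle has at least `g` edges, and some cycle has exactly `g` edges) and does
not have the AOP property. -/
theorem stmt_14 (g : ℕ) (hg5 : 5 ≤ g) (hgodd : Odd g) :
    ((∀ (v : Fin g ⊕ Fin g) (w : (paperGraph g).Walk v v),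
        w.IsCycle → Odd w.length → g ≤ w.length) ∧
      ∃ (v : Fin g ⊕ Fin g) (w : (paperGraph g).Walk v v),
        w.IsCycle ∧ w.length = g) ∧
    ¬ HasAOP (paperGraph g) := by
  have : NeZero g := ⟨by omega⟩
  exact ⟨⟨fun _ _ _ hodd => paperGraph.le_length_of_odd (by omega) hodd,
    paperGraph.exists_isCycle_length_eq (by omega)⟩, paperGraph.not_hasAOP (by omega) hgodd⟩
end

section
/- The shift graph G_{9,2} does not have the AOP property; that is, for every acyclic orientation of G_{9,2} there exist two vertices with two distinct directed paths from one to the other. -/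
open SimpleGraph

/-!
An acyclic orientation admits two walks with the same ends only if it admits two paths with
the same ends, so the AOP property says that walks are determined by their ends. On a 4-cycle
this forces the alternating orientation, so in a complete bipartite subgraph with at least two
vertices on each side all edges point the same way. In `G_{n,2}` the edges `(i,j)—(j,k)` with
a fixed middle index `j` form such a subgraph when `2 ≤ j ≤ n - 3`. In `G_{9,2}` three of the
five middle indices `2, …, 6`, say `j < k < l`, get the same direction, say forward, and then
`(0,j) → (j,l) → (l,8)` and `(0,j) → (j,k) → (k,l) → (l,8)` are two paths.
-/

def UniqueWalks {V : Type} (D : V → V → Prop) : Prop :=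
  ∀ l₁ l₂ : List V, l₁.IsChain D → l₂.IsChain D → l₁.head? = l₂.head? →
    l₁.getLast? = l₂.getLast? → l₁ = l₂

namespace UniqueWalks

variable {V : Type} {D : V → V → Prop}

theorem of_acyclic (hA : DigraphAcyclic D) (hU : UniqueDipaths D) : UniqueWalks D := by
  have nodup (l : List V) (hl : l.IsChain D) : l.Nodup := by
    refine (List.isChain_iff_pairwise.mp (hl.imp fun _ _ => Relation.TransGen.single)).imp ?_
    rintro a _ h rfl
    exact hA a h
  intro l₁ l₂ h₁ h₂ hhead hlast
  cases l₁ with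
  | nil => simpa [eq_comm] using hhead
  | cons x t =>
    have hy := List.getLast?_eq_some_getLast (List.cons_ne_nil x t)
    exact hU x _ _ _ ⟨h₁, rfl, hy, nodup _ h₁⟩ ⟨h₂, hhead.symm, hlast ▸ hy, nodup _ h₂⟩

theorem flip (hU : UniqueWalks D) : UniqueWalks (flip D) := fun l₁ l₂ h₁ h₂ hhead hlast =>
  List.reverse_inj.mp <| hU _ _ (List.isChain_reverse.mpr h₁) (List.isChain_reverse.mpr h₂)
    (by simpa using hlast) (by simpa using hhead)

theorem fourCycle_alternating (hU : UniqueWalks D) {w x y z : V} (hwy : w ≠ y) (hxz : x ≠ z)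
    (hxy : D x y ∨ D y x) (hyz : D y z ∨ D z y) (hzw : D z w ∨ D w z) (hwx : D w x) :
    D y x ∧ D w z := by
  rcases hxy with hxy | hyx
  · exfalso
    rcases hyz with hyz | hzy <;> rcases hzw with hzw | hwz
    · simpa using hU [w] [w, x, y, z, w] (by simp) (by simp [*]) rfl rfl
    · simpa using hU [w, z] [w, x, y, z] (by simp [*]) (by simp [*]) rfl rfl
    · simpa using hU [z, y] [z, w, x, y] (by simp [*]) (by simp [*]) rfl rfl
    · simpa [hxz] using hU [w, x, y] [w, z, y] (by simp [*]) (by simp [*]) rfl rfl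
  · refine ⟨hyx, hzw.resolve_left fun hzw => ?_⟩
    rcases hyz with hyz | hzy
    · simpa using hU [y, x] [y, z, w, x] (by simp [*]) (by simp [*]) rfl rfl
    · simpa [hwy] using hU [z, w, x] [z, y, x] (by simp [*]) (by simp [*]) rfl rfl

theorem iff_of_biclique (hU : UniqueWalks D) {s t : Set V} (hs : s.Nontrivial)
    (ht : t.Nontrivial) (hst : ∀ u ∈ s, ∀ v ∈ t, D u v ∨ D v u) {u u' v v' : V}
    (hu : u ∈ s) (hu' : u' ∈ s) (hv : v ∈ t) (hv' : v' ∈ t) : D u v ↔ D u' v' := by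
  have row (u) (hu : u ∈ s) (v) (hv : v ∈ t) (v') (hv' : v' ∈ t) (h : D u v) : D u v' := by
    obtain rfl | hvv' := eq_or_ne v v'
    · exact h
    obtain ⟨u'', hu'', hu''u⟩ := hs.exists_ne u
    exact (hU.fourCycle_alternating hu''u.symm hvv' (hst _ hu'' _ hv).symm (hst _ hu'' _ hv')
      (hst _ hu _ hv').symm h).2
  have col (u) (hu : u ∈ s) (u') (hu' : u' ∈ s) (v) (hv : v ∈ t) (h : D u v) : D u' v := by
    obtain rfl | huu' := eq_or_ne u u'
    · exact h
    obtain ⟨v'', hv'', hv''v⟩ := ht.exists_ne v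
    exact (hU.fourCycle_alternating huu' hv''v.symm (hst _ hu' _ hv).symm (hst _ hu' _ hv'')
      (hst _ hu _ hv'').symm h).1
  exact ⟨fun h => row _ hu' _ hv _ hv' (col _ hu _ hu' _ hv h),
    fun h => row _ hu _ hv' _ hv (col _ hu' _ hu _ hv' h)⟩

end UniqueWalks

theorem Finset.exists_lt_lt_of_two_lt_card {α : Type*} [LinearOrder α] {s : Finset α}
    (hs : 2 < s.card) : ∃ a ∈ s, ∃ b ∈ s, ∃ c ∈ s, a < b ∧ b < c :=
  let e := s.orderEmbOfCardLe hs
  ⟨e 0, s.orderEmbOfCardLe_mem hs 0, e 1, s.orderEmbOfCardLe_mem hs 1, e 2,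
    s.orderEmbOfCardLe_mem hs 2, e.strictMono (by decide), e.strictMono (by decide)⟩

theorem Finset.exists_lt_lt_monochromatic {α : Type*} [LinearOrder α] {s : Finset α}
    (hs : 4 < s.card) (P : α → Prop) : ∃ a ∈ s, ∃ b ∈ s, ∃ c ∈ s, a < b ∧ b < c ∧
      ((P a ∧ P b ∧ P c) ∨ (¬ P a ∧ ¬ P b ∧ ¬ P c)) := by
  classical
  have hcard := s.card_filter_add_card_filter_not P
  obtain h | h : 2 < (s.filter P).card ∨ 2 < (s.filter (¬ P ·)).card := by omega
  all_goals
    obtain ⟨a, ha, b, hb, c, hc, hab, hbc⟩ := exists_lt_lt_of_two_lt_card h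
    simp only [Finset.mem_filter] at ha hb hc
    exact ⟨a, ha.1, b, hb.1, c, hc.1, hab, hbc, by tauto⟩

namespace ShiftGraph

variable {n : ℕ}

abbrev Vertex (n : ℕ) : Type := {p : Fin n × Fin n // p.1 < p.2}

theorem adj_of_snd_eq_fst {u v : Vertex n} (h : u.1.2 = v.1.1) : (ShiftGraph n).Adj u v :=
  (SimpleGraph.fromRel_adj _ _ _).mpr ⟨fun huv => (u.2.trans_eq h).ne (by rw [huv]), Or.inl h⟩

def ForwardAt (D : Vertex n → Vertex n → Prop) (j : Fin n) : Prop :=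
  ∀ u v : Vertex n, u.1.2 = j → v.1.1 = j → D u v

theorem forwardAt_or_forwardAt_flip {D : Vertex n → Vertex n → Prop}
    (hD : ∀ u v, (ShiftGraph n).Adj u v → D u v ∨ D v u) (hU : UniqueWalks D) {j : Fin n}
    (hj : 2 ≤ (j : ℕ)) (hjn : (j : ℕ) + 2 < n) : ForwardAt D j ∨ ForwardAt (flip D) j := by
  have hs : {u : Vertex n | u.1.2 = j}.Nontrivial :=
    ⟨⟨(⟨0, by omega⟩, j), show 0 < (j : ℕ) by omega⟩, rfl,
      ⟨(⟨1, by omega⟩, j), show 1 < (j : ℕ) by omega⟩, rfl, by simp [Subtype.ext_iff]⟩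
  have ht : {v : Vertex n | v.1.1 = j}.Nontrivial :=
    ⟨⟨(j, ⟨j + 1, by omega⟩), show (j : ℕ) < j + 1 by omega⟩, rfl,
      ⟨(j, ⟨j + 2, by omega⟩), show (j : ℕ) < j + 2 by omega⟩, rfl, by simp [Subtype.ext_iff]⟩
  have hst : ∀ u ∈ {u : Vertex n | u.1.2 = j}, ∀ v ∈ {v : Vertex n | v.1.1 = j},
      D u v ∨ D v u := fun u hu v hv => hD u v (adj_of_snd_eq_fst (hu.trans hv.symm))
  obtain ⟨u₀, hu₀⟩ := hs.nonempty
  obtain ⟨v₀, hv₀⟩ := ht.nonempty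
  by_cases h : D u₀ v₀
  · exact .inl fun u v hu hv => (hU.iff_of_biclique hs ht hst hu₀ hu hv₀ hv).mp h
  · exact .inr fun u v hu hv => (hst u hu v hv).resolve_left
      fun h' => h ((hU.iff_of_biclique hs ht hst hu₀ hu hv₀ hv).mpr h')

theorem not_forwardAt_three {D : Vertex n → Vertex n → Prop} (hU : UniqueWalks D)
    {i j k l m : Fin n} (hij : i < j) (hjk : j < k) (hkl : k < l) (hlm : l < m)
    (hj : ForwardAt D j) (hk : ForwardAt D k) (hl : ForwardAt D l) : False := by
  let ij : Vertex n := ⟨(i, j), hij⟩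
  let jk : Vertex n := ⟨(j, k), hjk⟩
  let jl : Vertex n := ⟨(j, l), hjk.trans hkl⟩
  let kl : Vertex n := ⟨(k, l), hkl⟩
  let lm : Vertex n := ⟨(l, m), hlm⟩
  simpa using hU [ij, jl, lm] [ij, jk, kl, lm]
    (by simp [hj ij jl rfl rfl, hl jl lm rfl rfl])
    (by simp [hj ij jk rfl rfl, hk jk kl rfl rfl, hl kl lm rfl rfl]) rfl rfl

end ShiftGraph

/-- The shift graph `G_{9,2}` does not have the AOP property: there is
no acyclic orientation of it with at most one directed path between any ordered pair of
vertices. -/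
theorem stmt_16 : ¬ HasAOP (ShiftGraph 9) := by
  rintro ⟨D, ⟨-, hD, -⟩, hA, hU⟩
  have hW := UniqueWalks.of_acyclic hA hU
  have hinge {j : Fin 9} (hj : j ∈ Finset.Icc 2 6) : 0 < j ∧ j < 8 ∧
      (¬ ShiftGraph.ForwardAt D j → ShiftGraph.ForwardAt (flip D) j) := by
    simp only [Finset.mem_Icc] at hj
    exact ⟨by omega, by omega,
      (ShiftGraph.forwardAt_or_forwardAt_flip hD hW (by omega) (by omega)).resolve_left⟩
  obtain ⟨j, hj, k, hk, l, hl, hjk, hkl, ⟨fj, fk, fl⟩ | ⟨fj, fk, fl⟩⟩ :=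
    Finset.exists_lt_lt_monochromatic (s := Finset.Icc (2 : Fin 9) 6) (by decide)
      (ShiftGraph.ForwardAt D)
  · exact ShiftGraph.not_forwardAt_three hW (hinge hj).1 hjk hkl (hinge hl).2.1 fj fk fl
  · exact ShiftGraph.not_forwardAt_three hW.flip (hinge hj).1 hjk hkl (hinge hl).2.1
      ((hinge hj).2.2 fj) ((hinge hk).2.2 fk) ((hinge hl).2.2 fl)
end
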